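/- Let G = YᵀY + δG with |δG| ≤ εn|Yᵀ||Y| entrywise (ε ≥ 0), and let w ∈ ℝᵐ. Then |wᵀGw - ‖Yw‖₂²| ≤ εn·Γ²·‖Yw‖₂², where Γ = ‖Y⁺‖₂‖|Y|‖₂ and Y ∈ ℝ^{n×m} has full column rank. -/

import Mathlib

open Matrix

/-- Euclidean 2-norm of a vector. -/
noncomputable def vnorm {n : ℕ} (x : Fin n → ℝ) : ℝ := Real.sqrt (∑ i, x i ^ 2)

/-- Spectral (ℓ²-operator) norm of a matrix. -/
noncomputable def specNorm {n r : ℕ} (Y : Matrix (Fin n) (Fin r) ℝ) : ℝ :=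
  ‖LinearMap.toContinuousLinearMap (Matrix.toEuclideanLin Y)‖

/-- Moore–Penrose pseudoinverse of a full-column-rank matrix. -/
noncomputable def pinv {n r : ℕ} (Y : Matrix (Fin n) (Fin r) ℝ) : Matrix (Fin r) (Fin n) ℝ :=
  (Yᵀ * Y)⁻¹ * Yᵀ

/-- Entrywise absolute value of a matrix. -/
def aent {n r : ℕ} (Y : Matrix (Fin n) (Fin r) ℝ) : Matrix (Fin n) (Fin r) ℝ :=
  Y.map (fun a => |a|)

/-!
The error `wᵀGw - ‖Yw‖²` is the quadratic form of `δG`, which the entrywise bound dominates by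
`εn · |w|ᵀ|Y|ᵀ|Y||w| = εn ‖|Y||w|‖²`. Full column rank gives `Y⁺Y = I`, so
`‖|Y||w|‖ ≤ ‖|Y|‖ ‖w‖ = ‖|Y|‖ ‖Y⁺(Yw)‖ ≤ Γ ‖Yw‖`.
-/

section Matrix

variable {ι κ K : Type*} [Fintype ι] [Fintype κ] [DecidableEq κ] [Field K]

theorem Matrix.isUnit_of_rank_eq_card {A : Matrix κ κ K} (hA : A.rank = Fintype.card κ) :
    IsUnit A :=
  mulVec_surjective_iff_isUnit.1 <| LinearMap.range_eq_top.1 <|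
    Submodule.eq_top_of_finrank_eq (hA.trans (Module.finrank_fintype_fun_eq_card K).symm)

theorem Matrix.isUnit_transpose_mul_self_of_rank_eq_card [LinearOrder K] [IsStrictOrderedRing K]
    {A : Matrix ι κ K} (hA : A.rank = Fintype.card κ) : IsUnit (Aᵀ * A) :=
  isUnit_of_rank_eq_card (by rw [rank_transpose_mul_self, hA])

theorem Matrix.abs_dotProduct_mulVec_le {R : Type*} [CommRing R] [LinearOrder R]
    [IsStrictOrderedRing R] {M B : Matrix ι ι R} (hMB : ∀ i j, |M i j| ≤ B i j)
    (x : ι → R) : |x ⬝ᵥ M *ᵥ x| ≤ |x| ⬝ᵥ B *ᵥ |x| := by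
  simp only [dotProduct, mulVec, Finset.mul_sum, Pi.abs_apply]
  refine (Finset.abs_sum_le_sum_abs _ _).trans (Finset.sum_le_sum fun i _ => ?_)
  refine (Finset.abs_sum_le_sum_abs _ _).trans (Finset.sum_le_sum fun j _ => ?_)
  rw [abs_mul, abs_mul]
  gcongr
  exact hMB i j

end Matrix

lemma vnorm_sq {k : ℕ} (x : Fin k → ℝ) : vnorm x ^ 2 = ∑ i, x i ^ 2 :=
  Real.sq_sqrt (Finset.sum_nonneg fun _ _ => sq_nonneg _)

lemma vnorm_abs {k : ℕ} (x : Fin k → ℝ) : vnorm |x| = vnorm x := by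
  simp [vnorm, sq_abs]

lemma vnorm_eq_norm_toLp {k : ℕ} (x : Fin k → ℝ) : vnorm x = ‖WithLp.toLp 2 x‖ := by
  simp [EuclideanSpace.norm_eq, vnorm, sq_abs]

lemma vnorm_mulVec_le {a b : ℕ} (A : Matrix (Fin a) (Fin b) ℝ) (x : Fin b → ℝ) :
    vnorm (A *ᵥ x) ≤ specNorm A * vnorm x := by
  rw [vnorm_eq_norm_toLp, vnorm_eq_norm_toLp]
  simpa [specNorm] using
    (LinearMap.toContinuousLinearMap (Matrix.toEuclideanLin A)).le_opNorm (WithLp.toLp 2 x)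

lemma dotProduct_transpose_mul_self_mulVec {a b : ℕ} (A : Matrix (Fin a) (Fin b) ℝ)
    (x : Fin b → ℝ) : x ⬝ᵥ (Aᵀ * A) *ᵥ x = vnorm (A *ᵥ x) ^ 2 := by
  rw [vnorm_sq, ← mulVec_mulVec, dotProduct_mulVec, vecMul_transpose]
  simp [dotProduct, sq]

lemma pinv_mul_self {n m : ℕ} {Y : Matrix (Fin n) (Fin m) ℝ} (hY : Y.rank = m) :
    pinv Y * Y = 1 := by
  have hunit := isUnit_transpose_mul_self_of_rank_eq_card (hY.trans (Fintype.card_fin m).symm)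
  rw [pinv, Matrix.mul_assoc, nonsing_inv_mul _ ((isUnit_iff_isUnit_det _).1 hunit)]

lemma vnorm_le_specNorm_pinv_mul {n m : ℕ} {Y : Matrix (Fin n) (Fin m) ℝ} (hY : Y.rank = m)
    (w : Fin m → ℝ) : vnorm w ≤ specNorm (pinv Y) * vnorm (Y *ᵥ w) := by
  simpa [mulVec_mulVec, pinv_mul_self hY] using vnorm_mulVec_le (pinv Y) (Y *ᵥ w)

lemma vnorm_aent_mulVec_abs_le {n m : ℕ} {Y : Matrix (Fin n) (Fin m) ℝ} (hY : Y.rank = m)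
    (w : Fin m → ℝ) :
    vnorm (aent Y *ᵥ |w|) ≤ specNorm (pinv Y) * specNorm (aent Y) * vnorm (Y *ᵥ w) :=
  calc vnorm (aent Y *ᵥ |w|) ≤ specNorm (aent Y) * vnorm w := by
        simpa [vnorm_abs] using vnorm_mulVec_le (aent Y) |w|
    _ ≤ specNorm (aent Y) * (specNorm (pinv Y) * vnorm (Y *ᵥ w)) := by
        gcongr
        · exact norm_nonneg _
        · exact vnorm_le_specNorm_pinv_mul hY w
    _ = specNorm (pinv Y) * specNorm (aent Y) * vnorm (Y *ᵥ w) := by ring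

/-- Perturbed Gram matrix quadratic form: if `G = YᵀY + δG` with
`|δG| ≤ εn|Yᵀ||Y|` entrywise and `Y` has full column rank, then
`|wᵀGw - ‖Yw‖₂²| ≤ εn Γ² ‖Yw‖₂²` where `Γ = ‖Y⁺‖₂‖|Y|‖₂`. -/
theorem stmt_18 {n m : ℕ} (Y : Matrix (Fin n) (Fin m) ℝ) (hrank : Y.rank = m)
    (ε : ℝ) (hε : 0 ≤ ε) (δG : Matrix (Fin m) (Fin m) ℝ)
    (hδG : ∀ i j, |δG i j| ≤ ε * n * (((aent Y)ᵀ * aent Y) i j))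
    (G : Matrix (Fin m) (Fin m) ℝ) (hG : G = Yᵀ * Y + δG)
    (w : Fin m → ℝ) :
    |w ⬝ᵥ G.mulVec w - vnorm (Y.mulVec w) ^ 2|
      ≤ ε * n * (specNorm (pinv Y) * specNorm (aent Y)) ^ 2
          * vnorm (Y.mulVec w) ^ 2 := by
  have hperturb : w ⬝ᵥ G *ᵥ w - vnorm (Y *ᵥ w) ^ 2 = w ⬝ᵥ δG *ᵥ w := by
    rw [hG, add_mulVec, dotProduct_add, dotProduct_transpose_mul_self_mulVec]
    ring
  rw [hperturb]
  calc |w ⬝ᵥ δG *ᵥ w| ≤ |w| ⬝ᵥ ((ε * n) • ((aent Y)ᵀ * aent Y)) *ᵥ |w| :=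
        abs_dotProduct_mulVec_le (by simpa using hδG) w
    _ = ε * n * vnorm (aent Y *ᵥ |w|) ^ 2 := by
        rw [smul_mulVec, dotProduct_smul, dotProduct_transpose_mul_self_mulVec, smul_eq_mul]
    _ ≤ ε * n * (specNorm (pinv Y) * specNorm (aent Y) * vnorm (Y *ᵥ w)) ^ 2 := by
        gcongr
        · exact Real.sqrt_nonneg _
        · exact vnorm_aent_mulVec_abs_le hrank w
    _ = ε * n * (specNorm (pinv Y) * specNorm (aent Y)) ^ 2 * vnorm (Y *ᵥ w) ^ 2 := by ring
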